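/- arXiv:1309.5336 — 3 statements merged into one kernel-verified Lean document; each statement's English description precedes it below -/
import Mathlib

section
/- If a hex in a bipartite graph has at most three odd segments, then at least five of its six feet lie in the same part of the bipartition. -/
open SimpleGraph

universe u

variable {V : Type u}

/-- A planar embedding of a simple graph: vertices go to distinct points of the plane and
edges to arcs (injective topological paths) that meet only at common endpoints. -/
structure PlanarEmbedding (G : SimpleGraph V) where
  vmap : V → ℝ × ℝ
  vmap_inj : Function.Injective vmap
  arc : ∀ ⦃x y : V⦄, G.Adj x y → _root_.Path (vmap x) (vmap y)
  arc_inj : ∀ ⦃x y : V⦄ (h : G.Adj x y), Function.Injective ⇑(arc h)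
  arc_symm : ∀ ⦃x y : V⦄ (h : G.Adj x y), Set.range ⇑(arc h) = Set.range ⇑(arc h.symm)
  arc_vertex : ∀ ⦃x y : V⦄ (h : G.Adj x y) (w : V), vmap w ∈ Set.range ⇑(arc h) → w = x ∨ w = y
  arc_disjoint : ∀ ⦃x y x' y' : V⦄ (h : G.Adj x y) (h' : G.Adj x' y'),
      s(x, y) ≠ s(x', y') →
      Set.range ⇑(arc h) ∩ Set.range ⇑(arc h') ⊆
        ({vmap x, vmap y} ∩ {vmap x', vmap y'} : Set (ℝ × ℝ))

/-- A graph is planar if it admits a planar embedding. -/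
def SimpleGraph.IsPlanar (G : SimpleGraph V) : Prop := Nonempty (PlanarEmbedding G)

/-- `(A, B)` is a bipartition of `G`. -/
def SimpleGraph.IsBipartition (G : SimpleGraph V) (A B : Set V) : Prop :=
  Disjoint A B ∧ A ∪ B = Set.univ ∧
    ∀ ⦃x y : V⦄, G.Adj x y → (x ∈ A ∧ y ∈ B) ∨ (x ∈ B ∧ y ∈ A)

/-- A finite graph is 3-connected: more than 3 vertices and removing at most 2 vertices
leaves a connected graph. -/
def SimpleGraph.ThreeConnected [Fintype V] (G : SimpleGraph V) : Prop :=
  4 ≤ Fintype.card V ∧ ∀ S : Set V, S.ncard ≤ 2 → (G.induce Sᶜ).Connected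

/-- Internally 4-connected: 3-connected, at least five vertices, and no partition
`(A, B, C)` of the vertices with `|A|, |B| ≥ 2`, `|C| = 3` and no edge between `A` and `B`. -/
def SimpleGraph.InternallyFourConnected [Fintype V] (G : SimpleGraph V) : Prop :=
  G.ThreeConnected ∧ 5 ≤ Fintype.card V ∧
    ¬ ∃ A B C : Set V, A ∪ B ∪ C = Set.univ ∧ Disjoint A B ∧ Disjoint A C ∧ Disjoint B C ∧
      2 ≤ A.ncard ∧ 2 ≤ B.ncard ∧ C.ncard = 3 ∧ ∀ x ∈ A, ∀ y ∈ B, ¬ G.Adj x y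

/-- A hex in `G`: a subdivision of `K_{3,3}` with feet `fA 0, fA 1, fA 2` on one side and
`fB 0, fB 1, fB 2` on the other, and nine internally disjoint segments `seg i j`. -/
structure SimpleGraph.Hex (G : SimpleGraph V) where
  fA : Fin 3 → V
  fB : Fin 3 → V
  injA : Function.Injective fA
  injB : Function.Injective fB
  disjAB : ∀ i j, fA i ≠ fB j
  seg : (i j : Fin 3) → G.Walk (fA i) (fB j)
  seg_path : ∀ i j, (seg i j).IsPath
  seg_meet : ∀ i j i' j', (i, j) ≠ (i', j') → ∀ x : V, x ∈ (seg i j).support →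
      x ∈ (seg i' j').support → (x = fA i ∧ i = i') ∨ (x = fB j ∧ j = j')

/-- The number of odd segments of a hex. -/
noncomputable def SimpleGraph.Hex.oddCount {G : SimpleGraph V} (H : G.Hex) : ℕ :=
  (Finset.univ.filter fun p : Fin 3 × Fin 3 => Odd (H.seg p.1 p.2).length).card

/-- A hex is odd if all nine segments have odd length. -/
def SimpleGraph.Hex.IsOdd {G : SimpleGraph V} (H : G.Hex) : Prop :=
  ∀ i j, Odd (H.seg i j).length

/-- A hex is optimal if no hex of `G` has strictly more odd segments. -/
def SimpleGraph.Hex.Optimal {G : SimpleGraph V} (H : G.Hex) : Prop :=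
  ∀ H' : G.Hex, H'.oddCount ≤ H.oddCount

/-- The vertex set of a walk, as a set. -/
def SimpleGraph.Walk.supp {G : SimpleGraph V} {x y : V} (w : G.Walk x y) : Set V :=
  {z | z ∈ w.support}

/-- The vertex set of a hex. -/
def SimpleGraph.Hex.suppSet {G : SimpleGraph V} (H : G.Hex) : Set V :=
  ⋃ (i : Fin 3) (j : Fin 3), (H.seg i j).supp

/-- The edge set of a hex. -/
def SimpleGraph.Hex.edgeSetH {G : SimpleGraph V} (H : G.Hex) : Set (Sym2 V) :=
  ⋃ (i : Fin 3) (j : Fin 3), {e | e ∈ (H.seg i j).edges}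

/-
In a bipartite graph a walk has odd length exactly when its ends lie in different parts. So if
`a` of the feet `fA` and `b` of the feet `fB` lie in `A`, the hex has `a(3-b) + (3-a)b` odd
segments, and this is at most `3` only when `a + b ≤ 1` or `a + b ≥ 5`.
-/

namespace SimpleGraph.IsBipartition

variable {G : SimpleGraph V} {A B : Set V}

theorem mem_right_iff (hbip : G.IsBipartition A B) {x : V} : x ∈ B ↔ x ∉ A := by
  have hx : x ∈ A ∪ B := hbip.2.1 ▸ Set.mem_univ x
  exact ⟨fun hB hA => Set.disjoint_left.mp hbip.1 hA hB, hx.resolve_left⟩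

theorem ncard_setOf_mem_right {ι : Type*} [Finite ι] (hbip : G.IsBipartition A B) (f : ι → V) :
    {i | f i ∈ B}.ncard = Nat.card ι - {i | f i ∈ A}.ncard := by
  simp_rw [hbip.mem_right_iff]
  exact Set.ncard_compl {i | f i ∈ A}

theorem even_length_iff (hbip : G.IsBipartition A B) {x y : V} (w : G.Walk x y) :
    Even w.length ↔ (x ∈ A ↔ y ∈ A) := by
  induction w with
  | nil => simp
  | @cons x z y hxz w ih =>
    have hswap : x ∈ A ↔ z ∉ A := by
      rcases hbip.2.2 hxz with ⟨hx, hz⟩ | ⟨hx, hz⟩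
      · simpa [hx] using hbip.mem_right_iff.mp hz
      · simpa [hz] using hbip.mem_right_iff.mp hx
    rw [Walk.length_cons, Nat.even_add_one, ih]
    tauto

end SimpleGraph.IsBipartition

theorem Set.ncard_setOf_not_iff {α β : Type*} [Finite α] [Finite β] (p : α → Prop)
    (q : β → Prop) :
    {x : α × β | ¬(p x.1 ↔ q x.2)}.ncard =
      {a | p a}.ncard * {b | ¬q b}.ncard + {a | ¬p a}.ncard * {b | q b}.ncard := by
  have hsplit : {x : α × β | ¬(p x.1 ↔ q x.2)} =
      {a | p a} ×ˢ {b | ¬q b} ∪ {a | ¬p a} ×ˢ {b | q b} := by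
    ext ⟨a, b⟩
    simp only [mem_ofPred_eq, mem_union, mem_prod]
    tauto
  have hdisj : Disjoint ({a | p a} ×ˢ {b | ¬q b}) ({a | ¬p a} ×ˢ {b | q b}) :=
    disjoint_prod.mpr (.inl (disjoint_left.mpr fun _ ha hna => hna ha))
  rw [hsplit, ncard_union_eq hdisj, ncard_prod, ncard_prod]

theorem Nat.five_le_add_or_of_mul_sub_add_le_three {a b : ℕ} (ha : a ≤ 3) (hb : b ≤ 3)
    (h : a * (3 - b) + (3 - a) * b ≤ 3) : 5 ≤ a + b ∨ 5 ≤ (3 - a) + (3 - b) := by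
  interval_cases a <;> interval_cases b <;> omega

theorem SimpleGraph.Hex.oddCount_eq_of_isBipartition {G : SimpleGraph V} {A B : Set V}
    (hbip : G.IsBipartition A B) (H : G.Hex) :
    H.oddCount = {i | H.fA i ∈ A}.ncard * {j | H.fB j ∈ B}.ncard +
      {i | H.fA i ∈ B}.ncard * {j | H.fB j ∈ A}.ncard := by
  have hodd : {p : Fin 3 × Fin 3 | Odd (H.seg p.1 p.2).length} =
      {p | ¬(H.fA p.1 ∈ A ↔ H.fB p.2 ∈ A)} :=
    Set.ext fun _ => Nat.not_even_iff_odd.symm.trans (not_congr (hbip.even_length_iff _))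
  simp_rw [hbip.mem_right_iff]
  rw [oddCount, ← Set.ncard_coe_finset, Finset.coe_filter_univ, hodd]
  exact Set.ncard_setOf_not_iff (H.fA · ∈ A) (H.fB · ∈ A)

/-- If a hex in a bipartite graph has at most three odd segments, then at least five of its
six feet lie in the same part of the bipartition. -/
theorem stmt_7 {V : Type u} (G : SimpleGraph V) (A B : Set V)
    (hbip : G.IsBipartition A B) (H : G.Hex) (h3 : H.oddCount ≤ 3) :
    5 ≤ {i : Fin 3 | H.fA i ∈ A}.ncard + {j : Fin 3 | H.fB j ∈ A}.ncard ∨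
      5 ≤ {i : Fin 3 | H.fA i ∈ B}.ncard + {j : Fin 3 | H.fB j ∈ B}.ncard := by
  have hle : ∀ s : Set (Fin 3), s.ncard ≤ 3 := fun s => by
    simpa using Set.ncard_le_card s
  rw [H.oddCount_eq_of_isBipartition hbip] at h3
  simp only [hbip.ncard_setOf_mem_right, Nat.card_fin] at h3 ⊢
  exact Nat.five_le_add_or_of_mul_sub_add_le_three (hle _) (hle _) h3
end

section
/- Every brace is internally 4-connected. -/
open SimpleGraph

universe u

variable {V : Type u}

set_option linter.unusedSectionVars false
set_option maxHeartbeats 1000000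

namespace BraceAux

variable {V : Type u} [Fintype V] {G : SimpleGraph V} {X Y : Set V}

/-! ### perfect matching partner function -/

lemma bot_isMatching (G : SimpleGraph V) : (⊥ : G.Subgraph).IsMatching := by
  intro v hv; simp [Subgraph.verts_bot] at hv

noncomputable def pmf (M : G.Subgraph) (h : M.IsPerfectMatching) : V → V :=
  fun v => (h.1 (h.2 v)).choose

lemma pmf_adj (M : G.Subgraph) (h : M.IsPerfectMatching) (v : V) :
    M.Adj v (pmf M h v) := (h.1 (h.2 v)).choose_spec.1

lemma pmf_eq (M : G.Subgraph) (h : M.IsPerfectMatching) {v w : V}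
    (hw : M.Adj v w) : pmf M h v = w := ((h.1 (h.2 v)).choose_spec.2 w hw).symm

lemma pmf_invol (M : G.Subgraph) (h : M.IsPerfectMatching) (v : V) :
    pmf M h (pmf M h v) = v := pmf_eq M h (pmf_adj M h v).symm

lemma pmf_inj (M : G.Subgraph) (h : M.IsPerfectMatching) :
    Function.Injective (pmf M h) :=
  Function.LeftInverse.injective (g := pmf M h) (pmf_invol M h)

lemma pmf_gadj (M : G.Subgraph) (h : M.IsPerfectMatching) (v : V) :
    G.Adj v (pmf M h v) := M.adj_sub (pmf_adj M h v)

lemma matched_le (M : G.Subgraph) (h : M.IsPerfectMatching) (T U : Set V)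
    (hm : ∀ v ∈ T, pmf M h v ∈ U) : T.ncard ≤ U.ncard :=
  Set.ncard_le_ncard_of_injOn _ hm ((pmf_inj M h).injOn) (Set.toFinite U)

/-! ### brace consequences -/

section brace
variable (hbrace : ∀ M : G.Subgraph, M.IsMatching → M.edgeSet.ncard ≤ 2 →
      ∃ M' : G.Subgraph, M.edgeSet ⊆ M'.edgeSet ∧ M'.IsPerfectMatching)

include hbrace

lemma exists_pm : ∃ M' : G.Subgraph, M'.IsPerfectMatching := by
  obtain ⟨M', _, h⟩ := hbrace ⊥ (bot_isMatching G) (by simp [Subgraph.edgeSet_bot])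
  exact ⟨M', h⟩

lemma exists_pm_one {x y : V} (h : G.Adj x y) :
    ∃ M' : G.Subgraph, M'.IsPerfectMatching ∧ M'.Adj x y := by
  obtain ⟨M', hsub, hM'⟩ := hbrace (G.subgraphOfAdj h) (Subgraph.IsMatching.subgraphOfAdj h)
    (by rw [edgeSet_subgraphOfAdj]; simp)
  refine ⟨M', hM', ?_⟩
  rw [← Subgraph.mem_edgeSet]
  exact hsub (by rw [edgeSet_subgraphOfAdj]; simp)

lemma exists_pm_two {x₁ y₁ x₂ y₂ : V} (h₁ : G.Adj x₁ y₁) (h₂ : G.Adj x₂ y₂)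
    (hxx : x₁ ≠ x₂) (hxy : x₁ ≠ y₂) (hyx : y₁ ≠ x₂) (hyy : y₁ ≠ y₂) :
    ∃ M' : G.Subgraph, M'.IsPerfectMatching ∧ M'.Adj x₁ y₁ ∧ M'.Adj x₂ y₂ := by
  have hdisj : Disjoint (G.subgraphOfAdj h₁).support (G.subgraphOfAdj h₂).support := by
    rw [support_subgraphOfAdj, support_subgraphOfAdj, Set.disjoint_iff]
    rintro z ⟨hz1, hz2⟩
    simp only [Set.mem_insert_iff, Set.mem_singleton_iff] at hz1 hz2
    rcases hz1 with rfl | rfl <;> rcases hz2 with rfl | rfl <;> simp_all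
  have hm : ((G.subgraphOfAdj h₁) ⊔ (G.subgraphOfAdj h₂)).IsMatching :=
    (Subgraph.IsMatching.subgraphOfAdj h₁).sup (Subgraph.IsMatching.subgraphOfAdj h₂) hdisj
  have hcard2 : ((G.subgraphOfAdj h₁) ⊔ (G.subgraphOfAdj h₂)).edgeSet.ncard ≤ 2 := by
    rw [Subgraph.edgeSet_sup, edgeSet_subgraphOfAdj, edgeSet_subgraphOfAdj]
    exact le_trans (Set.ncard_union_le _ _) (by simp)
  obtain ⟨M', hsub, hM'⟩ := hbrace _ hm hcard2
  refine ⟨M', hM', ?_, ?_⟩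
  · rw [← Subgraph.mem_edgeSet]
    exact hsub (by rw [Subgraph.edgeSet_sup, edgeSet_subgraphOfAdj, edgeSet_subgraphOfAdj]; simp)
  · rw [← Subgraph.mem_edgeSet]
    exact hsub (by rw [Subgraph.edgeSet_sup, edgeSet_subgraphOfAdj, edgeSet_subgraphOfAdj]; simp)

end brace

/-! ### bipartition helpers -/

lemma bip_symm (h : G.IsBipartition X Y) : G.IsBipartition Y X :=
  ⟨h.1.symm, by rw [Set.union_comm]; exact h.2.1, fun x y hadj => (h.2.2 hadj).symm⟩

lemma bip_mem_or (h : G.IsBipartition X Y) (v : V) : v ∈ X ∨ v ∈ Y := by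
  have := h.2.1 ▸ Set.mem_univ v
  rwa [Set.mem_union] at this

lemma bip_notMem (h : G.IsBipartition X Y) {v : V} (hv : v ∈ X) : v ∉ Y :=
  fun hv' => (Set.disjoint_left.1 h.1) hv hv'

lemma bip_adj (h : G.IsBipartition X Y) {x y : V} (ha : G.Adj x y) (hx : x ∈ X) : y ∈ Y := by
  rcases h.2.2 ha with ⟨_, hy⟩ | ⟨hx', _⟩
  · exact hy
  · exact absurd hx' (fun hx' => bip_notMem (bip_symm h) hx' hx)

lemma bip_ne (h : G.IsBipartition X Y) {x y : V} (hx : x ∈ X) (hy : y ∈ Y) : x ≠ y :=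
  fun he => bip_notMem h hx (he ▸ hy)

/-- the neighborhood of a set -/
def nbhd (G : SimpleGraph V) (T : Set V) : Set V := {y | ∃ x ∈ T, G.Adj x y}

lemma nbhd_sub (h : G.IsBipartition X Y) {T : Set V} (hT : T ⊆ X) : nbhd G T ⊆ Y := by
  rintro y ⟨x, hx, hadj⟩
  exact bip_adj h hadj (hT hx)

lemma bip_balance (hbip : G.IsBipartition X Y)
    (hbrace : ∀ M : G.Subgraph, M.IsMatching → M.edgeSet.ncard ≤ 2 →
      ∃ M' : G.Subgraph, M.edgeSet ⊆ M'.edgeSet ∧ M'.IsPerfectMatching) :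
    X.ncard = Y.ncard := by
  obtain ⟨M, hM⟩ := exists_pm hbrace
  refine le_antisymm (matched_le M hM X Y ?_) (matched_le M hM Y X ?_)
  · exact fun v hv => bip_adj hbip (pmf_gadj M hM v) hv
  · exact fun v hv => bip_adj (bip_symm hbip) (pmf_gadj M hM v) hv

lemma card_XY (hbip : G.IsBipartition X Y) : X.ncard + Y.ncard = Fintype.card V := by
  rw [← Set.ncard_union_eq hbip.1, hbip.2.1, Set.ncard_univ, Nat.card_eq_fintype_card]

/-! ### partition counting -/

lemma mem3 {P Q S : Set V} (hU : P ∪ Q ∪ S = Set.univ) (v : V) : v ∈ P ∨ v ∈ Q ∨ v ∈ S := by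
  have := hU ▸ Set.mem_univ v
  rw [Set.mem_union, Set.mem_union] at this
  tauto

lemma split3 {P Q S : Set V} (hU : P ∪ Q ∪ S = Set.univ) (hPQ : Disjoint P Q)
    (hPS : Disjoint P S) (hQS : Disjoint Q S) (W : Set V) :
    (P ∩ W).ncard + (Q ∩ W).ncard + (S ∩ W).ncard = W.ncard := by
  have h1 : (P ∩ W) ∪ (Q ∩ W) ∪ (S ∩ W) = W := by
    rw [← Set.union_inter_distrib_right, ← Set.union_inter_distrib_right, hU,
      Set.univ_inter]
  have d1 : Disjoint (P ∩ W) (Q ∩ W) := hPQ.mono Set.inter_subset_left Set.inter_subset_left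
  have d2 : Disjoint ((P ∩ W) ∪ (Q ∩ W)) (S ∩ W) :=
    Set.disjoint_union_left.2
      ⟨hPS.mono Set.inter_subset_left Set.inter_subset_left,
       hQS.mono Set.inter_subset_left Set.inter_subset_left⟩
  rw [← Set.ncard_union_eq d1, ← Set.ncard_union_eq d2, h1]

lemma split2 (hbip : G.IsBipartition X Y) (W : Set V) :
    (W ∩ X).ncard + (W ∩ Y).ncard = W.ncard := by
  have h1 : (W ∩ X) ∪ (W ∩ Y) = W := by
    rw [← Set.inter_union_distrib_left, hbip.2.1, Set.inter_univ]
  have d1 : Disjoint (W ∩ X) (W ∩ Y) := hbip.1.mono Set.inter_subset_right Set.inter_subset_right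
  rw [← Set.ncard_union_eq d1, h1]

/-! ### connectivity helpers -/

lemma walk_cross (P : Set V) {p q : V} (w : G.Walk p q)
    (hp : p ∈ P) (hq : q ∉ P) : ∃ x y, x ∈ P ∧ y ∉ P ∧ G.Adj x y := by
  induction w with
  | nil => exact absurd hp hq
  | cons h w ih =>
    rename_i a b c
    by_cases hb : b ∈ P
    · exact ih hb hq
    · exact ⟨a, b, hp, hb, h⟩

lemma no0cut (hconn : G.Connected) (P Q : Set V)
    (hP : P.Nonempty) (hQ : Q.Nonempty) (hU : P ∪ Q = Set.univ) (hd : Disjoint P Q)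
    (hne : ∀ x ∈ P, ∀ y ∈ Q, ¬ G.Adj x y) : False := by
  obtain ⟨p, hp⟩ := hP
  obtain ⟨q, hq⟩ := hQ
  have hqP : q ∉ P := fun h => hd.ne_of_mem h hq rfl
  obtain ⟨x, y, hx, hy, hadj⟩ := walk_cross P ((hconn.preconnected p q).some) hp hqP
  have hyQ : y ∈ Q := by
    rcases (Set.mem_union ..).1 (hU ▸ Set.mem_univ y) with h | h
    · exact absurd h hy
    · exact h
  exact hne x hx y hyQ hadj

section cuts

variable (hbip : G.IsBipartition X Y) (hconn : G.Connected)
  (hbrace : ∀ M : G.Subgraph, M.IsMatching → M.edgeSet.ncard ≤ 2 →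
      ∃ M' : G.Subgraph, M.edgeSet ⊆ M'.edgeSet ∧ M'.IsPerfectMatching)

include hbip hconn hbrace

lemma nocut1X {P Q : Set V} {s : V} (hsX : s ∈ X) (hP : P.Nonempty) (hQ : Q.Nonempty)
    (hU : P ∪ Q ∪ {s} = Set.univ) (hPQ : Disjoint P Q) (hPs : s ∉ P) (hQs : s ∉ Q)
    (hne : ∀ x ∈ P, ∀ y ∈ Q, ¬ G.Adj x y) : False := by
  -- s has a neighbour in P
  have hyP : ∃ y ∈ P, G.Adj s y := by
    by_contra h
    push_neg at h
    refine no0cut hconn P (Q ∪ {s}) hP ⟨s, Or.inr rfl⟩ ?_ ?_ ?_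
    · rw [← Set.union_assoc]
      exact hU
    · exact Set.disjoint_union_right.2 ⟨hPQ, Set.disjoint_singleton_right.2 hPs⟩
    · rintro x hx y (hy | rfl) hadj
      · exact hne x hx y hy hadj
      · exact h x hx hadj.symm
  have hyQ : ∃ y ∈ Q, G.Adj s y := by
    by_contra h
    push_neg at h
    refine no0cut hconn (P ∪ {s}) Q ⟨s, Or.inr rfl⟩ hQ ?_ ?_ ?_
    · rw [Set.union_right_comm] at hU
      rwa [Set.union_assoc] at hU ⊢ <;> try exact hU
    · exact Set.disjoint_union_left.2 ⟨hPQ, Set.disjoint_singleton_left.2 hQs⟩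
    · rintro x (hx | rfl) y hy hadj
      · exact hne x hx y hy hadj
      · exact h y hy hadj
  obtain ⟨yP, hyPP, haP⟩ := hyP
  obtain ⟨yQ, hyQQ, haQ⟩ := hyQ
  have hyPY : yP ∈ Y := bip_adj hbip haP hsX
  have hyQY : yQ ∈ Y := bip_adj hbip haQ hsX
  obtain ⟨M₁, hM₁, hMa₁⟩ := exists_pm_one hbrace haQ
  obtain ⟨M₂, hM₂, hMa₂⟩ := exists_pm_one hbrace haP
  have htri := mem3 hU
  -- counting with M₁ : matches P within itself
  have h1 : (P ∩ X).ncard ≤ (P ∩ Y).ncard := by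
    refine matched_le M₁ hM₁ _ _ ?_
    rintro v ⟨hvP, hvX⟩
    have hfY : pmf M₁ hM₁ v ∈ Y := bip_adj hbip (pmf_gadj M₁ hM₁ v) hvX
    rcases htri (pmf M₁ hM₁ v) with hf | hf | hf
    · exact ⟨hf, hfY⟩
    · exact absurd (pmf_gadj M₁ hM₁ v) (hne v hvP _ hf)
    · rw [Set.mem_singleton_iff] at hf
      exact absurd hsX (fun h' => bip_notMem hbip h' (hf ▸ hfY))
  have h2 : (P ∩ Y).ncard ≤ (P ∩ X).ncard := by
    refine matched_le M₁ hM₁ _ _ ?_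
    rintro v ⟨hvP, hvY⟩
    have hfX : pmf M₁ hM₁ v ∈ X := bip_adj (bip_symm hbip) (pmf_gadj M₁ hM₁ v) hvY
    rcases htri (pmf M₁ hM₁ v) with hf | hf | hf
    · exact ⟨hf, hfX⟩
    · exact absurd (pmf_gadj M₁ hM₁ v) (hne v hvP _ hf)
    · rw [Set.mem_singleton_iff] at hf
      exfalso
      have hv' : v = pmf M₁ hM₁ s := by
        rw [← hf, pmf_invol]
      rw [pmf_eq M₁ hM₁ hMa₁] at hv'
      exact Set.disjoint_left.1 hPQ hvP (hv' ▸ hyQQ)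
  -- counting with M₂ : matches Q within itself
  have h3 : (Q ∩ X).ncard ≤ (Q ∩ Y).ncard := by
    refine matched_le M₂ hM₂ _ _ ?_
    rintro v ⟨hvQ, hvX⟩
    have hfY : pmf M₂ hM₂ v ∈ Y := bip_adj hbip (pmf_gadj M₂ hM₂ v) hvX
    rcases htri (pmf M₂ hM₂ v) with hf | hf | hf
    · exact absurd (pmf_gadj M₂ hM₂ v).symm (hne _ hf v hvQ)
    · exact ⟨hf, hfY⟩
    · rw [Set.mem_singleton_iff] at hf
      exact absurd hsX (fun h' => bip_notMem hbip h' (hf ▸ hfY))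
  have h4 : (Q ∩ Y).ncard ≤ (Q ∩ X).ncard := by
    refine matched_le M₂ hM₂ _ _ ?_
    rintro v ⟨hvQ, hvY⟩
    have hfX : pmf M₂ hM₂ v ∈ X := bip_adj (bip_symm hbip) (pmf_gadj M₂ hM₂ v) hvY
    rcases htri (pmf M₂ hM₂ v) with hf | hf | hf
    · exact absurd (pmf_gadj M₂ hM₂ v).symm (hne _ hf v hvQ)
    · exact ⟨hf, hfX⟩
    · rw [Set.mem_singleton_iff] at hf
      exfalso
      have hv' : v = pmf M₂ hM₂ s := by
        rw [← hf, pmf_invol]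
      rw [pmf_eq M₂ hM₂ hMa₂] at hv'
      exact Set.disjoint_left.1 hPQ (hv' ▸ hyPP) hvQ
  -- counting
  have hsx : (({s} : Set V) ∩ X).ncard = 1 := by
    have : ({s} : Set V) ∩ X = {s} := by
      rw [Set.inter_eq_left]
      simpa using hsX
    rw [this, Set.ncard_singleton]
  have hsy : (({s} : Set V) ∩ Y).ncard = 0 := by
    have : ({s} : Set V) ∩ Y = ∅ := by
      rw [Set.eq_empty_iff_forall_notMem]
      rintro z ⟨rfl, hzY⟩
      exact bip_notMem hbip hsX hzY
    rw [this, Set.ncard_empty]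
  have hPQs : Disjoint P {s} := Set.disjoint_singleton_right.2 hPs
  have hQs' : Disjoint Q {s} := Set.disjoint_singleton_right.2 hQs
  have hX := split3 hU hPQ hPQs hQs' X
  have hY := split3 hU hPQ hPQs hQs' Y
  have hbal : X.ncard = Y.ncard := bip_balance hbip hbrace
  omega

omit hbip in
lemma nocut1 {P Q : Set V} {s : V} (hP : P.Nonempty) (hQ : Q.Nonempty)
    (hU : P ∪ Q ∪ {s} = Set.univ) (hPQ : Disjoint P Q) (hPs : s ∉ P) (hQs : s ∉ Q)
    (hne : ∀ x ∈ P, ∀ y ∈ Q, ¬ G.Adj x y) (hbip' : G.IsBipartition X Y) : False := by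
  rcases bip_mem_or hbip' s with hs | hs
  · exact nocut1X hbip' hconn hbrace hs hP hQ hU hPQ hPs hQs hne
  · exact nocut1X (bip_symm hbip') hconn hbrace hs hP hQ hU hPQ hPs hQs hne

lemma surplus (hcard : 5 ≤ Fintype.card V) {T : Set V} (hTX : T ⊆ X) (hTne : T.Nonempty)
    (hw : ∃ y ∈ Y, y ∉ nbhd G T) : T.ncard + 2 ≤ (nbhd G T).ncard := by
  obtain ⟨y₀, hy₀Y, hy₀N⟩ := hw
  have hNY : nbhd G T ⊆ Y := nbhd_sub hbip hTX
  have hy₀T : y₀ ∉ T := fun h => bip_notMem hbip (hTX h) hy₀Y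
  by_cases hpair : ∃ x₁ y₁ x₂ y₂ : V, x₁ ∉ T ∧ y₁ ∈ nbhd G T ∧ x₂ ∉ T ∧ y₂ ∈ nbhd G T ∧
      G.Adj x₁ y₁ ∧ G.Adj x₂ y₂ ∧ x₁ ≠ x₂ ∧ y₁ ≠ y₂
  · -- two disjoint edges leaving N(T): extend them and count
    obtain ⟨x₁, y₁, x₂, y₂, hx₁, hy₁, hx₂, hy₂, ha₁, ha₂, hxx, hyy⟩ := hpair
    have hx₁X : x₁ ∈ X := bip_adj (bip_symm hbip) ha₁.symm (hNY hy₁)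
    have hx₂X : x₂ ∈ X := bip_adj (bip_symm hbip) ha₂.symm (hNY hy₂)
    obtain ⟨M, hM, hMa₁, hMa₂⟩ := exists_pm_two hbrace ha₁ ha₂ hxx
      (bip_ne hbip hx₁X (hNY hy₂)) (bip_ne hbip hx₂X (hNY hy₁)).symm hyy
    have key : ∀ v ∈ T, pmf M hM v ∈ (nbhd G T) \ {y₁, y₂} := by
      intro v hv
      refine ⟨⟨v, hv, pmf_gadj M hM v⟩, ?_⟩
      rintro (hf | hf)
      · have : v = x₁ := by
          have := pmf_invol M hM v
          rw [hf, pmf_eq M hM hMa₁.symm] at this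
          exact this.symm
        exact hx₁ (this ▸ hv)
      · have : v = x₂ := by
          have := pmf_invol M hM v
          rw [Set.mem_singleton_iff] at hf
          rw [hf, pmf_eq M hM hMa₂.symm] at this
          exact this.symm
        exact hx₂ (this ▸ hv)
    have h1 : T.ncard ≤ ((nbhd G T) \ {y₁, y₂}).ncard := matched_le M hM _ _ key
    have hsub : ({y₁, y₂} : Set V) ⊆ nbhd G T := by
      rintro z (rfl | rfl)
      · exact hy₁
      · exact hy₂
    have h2 : ((nbhd G T) \ {y₁, y₂}).ncard = (nbhd G T).ncard - 2 := by
      rw [Set.ncard_diff hsub, Set.ncard_pair hyy]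
    have h3 : 2 ≤ (nbhd G T).ncard := by
      calc 2 = ({y₁, y₂} : Set V).ncard := (Set.ncard_pair hyy).symm
        _ ≤ _ := Set.ncard_le_ncard hsub (Set.toFinite _)
    omega
  · exfalso
    by_cases hR : ∃ x y : V, x ∉ T ∧ y ∈ nbhd G T ∧ G.Adj x y
    · obtain ⟨x₀, w₀, hx₀, hw₀, ha₀⟩ := hR
      have hx₀X : x₀ ∈ X := bip_adj (bip_symm hbip) ha₀.symm (hNY hw₀)
      by_cases hallx : ∀ x y : V, x ∉ T → y ∈ nbhd G T → G.Adj x y → x = x₀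
      · -- all escaping edges go through the cut vertex x₀
        have hx₀nb : x₀ ∉ nbhd G T := fun h => bip_notMem hbip hx₀X (hNY h)
        refine nocut1 hconn hbrace (P := T ∪ nbhd G T)
          (Q := (T ∪ nbhd G T ∪ {x₀})ᶜ) (s := x₀)
          ⟨hTne.choose, Or.inl hTne.choose_spec⟩ ⟨y₀, ?_⟩ ?_ ?_ ?_ ?_ ?_ hbip
        · simp only [Set.mem_compl_iff, Set.mem_union, Set.mem_singleton_iff]
          push_neg
          exact ⟨⟨hy₀T, hy₀N⟩, (bip_ne hbip hx₀X hy₀Y).symm⟩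
        · ext z
          simp only [Set.mem_union, Set.mem_compl_iff, Set.mem_singleton_iff, Set.mem_univ,
            iff_true]
          tauto
        · rw [Set.disjoint_left]
          intro z hz hz'
          rw [Set.mem_compl_iff] at hz'
          exact hz' (Or.inl hz)
        · rintro (hx | hx)
          · exact hx₀ hx
          · exact hx₀nb hx
        · intro h
          rw [Set.mem_compl_iff] at h
          exact h (Or.inr rfl)
        · rintro x (hxT | hxN) y hy hadj
          · rw [Set.mem_compl_iff] at hy
            exact hy (Or.inl (Or.inr ⟨x, hxT, hadj⟩))
          · have hyT : y ∉ T := by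
              intro hyT
              rw [Set.mem_compl_iff] at hy
              exact hy (Or.inl (Or.inl hyT))
            have := hallx y x hyT hxN hadj.symm
            rw [Set.mem_compl_iff] at hy
            exact hy (Or.inr (by rw [Set.mem_singleton_iff]; exact this))
      · push_neg at hallx
        obtain ⟨x₁, y₁, hx₁, hy₁, ha₁, hx₁ne⟩ := hallx
        have hw₀y₁ : w₀ = y₁ := by
          by_contra hne'
          exact hpair ⟨x₀, w₀, x₁, y₁, hx₀, hw₀, hx₁, hy₁, ha₀, ha₁, fun h => hx₁ne h.symm, hne'⟩
        have hally : ∀ x y : V, x ∉ T → y ∈ nbhd G T → G.Adj x y → y = y₁ := by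
          intro x y hx hy hadj
          by_contra hne'
          by_cases hxx₀ : x = x₀
          · subst hxx₀
            exact hpair ⟨x, y, x₁, y₁, hx, hy, hx₁, hy₁, hadj, ha₁, fun h => hx₁ne h.symm, hne'⟩
          · exact hpair ⟨x, y, x₀, w₀, hx, hy, hx₀, hw₀, hadj, ha₀, hxx₀,
              fun h => hne' (h.trans hw₀y₁)⟩
        have hy₁N : y₁ ∈ nbhd G T := hy₁
        have hy₁Y : y₁ ∈ Y := hNY hy₁N
        have hy₁T : y₁ ∉ T := fun h => bip_notMem hbip (hTX h) hy₁Y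
        refine nocut1 hconn hbrace (P := T ∪ (nbhd G T \ {y₁}))
          (Q := (T ∪ nbhd G T ∪ {y₁})ᶜ) (s := y₁)
          ⟨hTne.choose, Or.inl hTne.choose_spec⟩ ⟨y₀, ?_⟩ ?_ ?_ ?_ ?_ ?_ hbip
        · simp only [Set.mem_compl_iff, Set.mem_union, Set.mem_singleton_iff]
          push_neg
          exact ⟨⟨hy₀T, hy₀N⟩, fun h => hy₀N (h ▸ hy₁N)⟩
        · ext z
          simp only [Set.mem_union, Set.mem_compl_iff, Set.mem_singleton_iff, Set.mem_diff,
            Set.mem_univ, iff_true]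
          by_cases hz : z = y₁ <;> tauto
        · rw [Set.disjoint_left]
          rintro z (hz | hz) hz' <;> rw [Set.mem_compl_iff] at hz'
          · exact hz' (Or.inl (Or.inl hz))
          · exact hz' (Or.inl (Or.inr hz.1))
        · rintro (hx | hx)
          · exact hy₁T hx
          · exact hx.2 rfl
        · intro h
          rw [Set.mem_compl_iff] at h
          exact h (Or.inr rfl)
        · rintro x (hxT | hxN) y hy hadj <;> rw [Set.mem_compl_iff] at hy
          · have hyN : y ∈ nbhd G T := ⟨x, hxT, hadj⟩
            exact hy (Or.inl (Or.inr hyN))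
          · have hyT : y ∉ T := fun hyT => hy (Or.inl (Or.inl hyT))
            have := hally y x hyT hxN.1 hadj.symm
            exact hxN.2 (by rw [Set.mem_singleton_iff]; exact this)
    · -- no edges leave T ∪ N(T) at all
      push_neg at hR
      refine no0cut hconn (T ∪ nbhd G T) (T ∪ nbhd G T)ᶜ
        ⟨hTne.choose, Or.inl hTne.choose_spec⟩ ⟨y₀, ?_⟩ (Set.union_compl_self _)
        disjoint_compl_right ?_
      · simp only [Set.mem_compl_iff, Set.mem_union]
        push_neg
        exact ⟨hy₀T, hy₀N⟩
      · rintro x (hxT | hxN) y hy hadj <;> rw [Set.mem_compl_iff] at hy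
        · exact hy (Or.inr ⟨x, hxT, hadj⟩)
        · have hyT : y ∉ T := fun hyT => hy (Or.inl hyT)
          exact hR y x hyT hxN hadj.symm

lemma keybound (hcard : 5 ≤ Fintype.card V) {P Q S : Set V}
    (hU : P ∪ Q ∪ S = Set.univ) (hne : ∀ x ∈ P, ∀ y ∈ Q, ¬ G.Adj x y)
    (h1 : (P ∩ Y).Nonempty) (h2 : (Q ∩ X).Nonempty) :
    (P ∩ Y).ncard + 2 ≤ (P ∩ X).ncard + (S ∩ X).ncard := by
  obtain ⟨x₀, hx₀Q, hx₀X⟩ := h2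
  have hwit : x₀ ∉ nbhd G (P ∩ Y) := by
    rintro ⟨p, ⟨hpP, _⟩, hadj⟩
    exact hne p hpP x₀ hx₀Q hadj
  have hkey := surplus (bip_symm hbip) hconn hbrace hcard
    (T := P ∩ Y) Set.inter_subset_right h1 ⟨x₀, hx₀X, hwit⟩
  have hsub : nbhd G (P ∩ Y) ⊆ (P ∩ X) ∪ (S ∩ X) := by
    rintro z ⟨p, ⟨hpP, hpY⟩, hadj⟩
    have hzX : z ∈ X := bip_adj (bip_symm hbip) hadj hpY
    rcases mem3 hU z with hz | hz | hz
    · exact Or.inl ⟨hz, hzX⟩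
    · exact absurd hadj (hne p hpP z hz)
    · exact Or.inr ⟨hz, hzX⟩
  calc (P ∩ Y).ncard + 2 ≤ (nbhd G (P ∩ Y)).ncard := hkey
    _ ≤ ((P ∩ X) ∪ (S ∩ X)).ncard := Set.ncard_le_ncard hsub (Set.toFinite _)
    _ ≤ (P ∩ X).ncard + (S ∩ X).ncard := Set.ncard_union_le _ _

lemma corner (hcard : 5 ≤ Fintype.card V) {P Q S : Set V}
    (hU : P ∪ Q ∪ S = Set.univ) (hPQ : Disjoint P Q) (hPS : Disjoint P S) (hQS : Disjoint Q S)
    (hne : ∀ x ∈ P, ∀ y ∈ Q, ¬ G.Adj x y) (hP : P.Nonempty) (hQ : Q.Nonempty)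
    (hS3 : S.ncard ≤ 3) (hor : S.ncard ≤ 2 ∨ (2 ≤ P.ncard ∧ 2 ≤ Q.ncard)) :
    (P ∩ Y).Nonempty := by
  rw [Set.nonempty_iff_ne_empty]
  intro hPY
  have hPX : P ⊆ X := by
    intro v hv
    rcases bip_mem_or hbip v with h | h
    · exact h
    · exact absurd ⟨hv, h⟩ (Set.eq_empty_iff_forall_notMem.1 hPY v)
  have hNsub : nbhd G P ⊆ S ∩ Y := by
    rintro z ⟨p, hpP, hadj⟩
    have hzY : z ∈ Y := bip_adj hbip hadj (hPX hpP)
    rcases mem3 hU z with hz | hz | hz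
    · exact absurd ⟨hz, hzY⟩ (Set.eq_empty_iff_forall_notMem.1 hPY z)
    · exact absurd hadj (hne p hpP z hz)
    · exact ⟨hz, hzY⟩
  have hp1 : 1 ≤ P.ncard := (Set.ncard_pos (Set.toFinite P)).2 hP
  have hq1 : 1 ≤ Q.ncard := (Set.ncard_pos (Set.toFinite Q)).2 hQ
  have hbal : X.ncard = Y.ncard := bip_balance hbip hbrace
  have hV : X.ncard + Y.ncard = Fintype.card V := card_XY hbip
  by_cases hYN : ∀ y ∈ Y, y ∈ nbhd G P
  · -- then Y ⊆ S, so Q ⊆ X and everything is too small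
    have hYS : Y ⊆ S := fun y hy => (hNsub (hYN y hy)).1
    have hQX : Q ⊆ X := by
      intro v hv
      rcases bip_mem_or hbip v with h | h
      · exact h
      · exact absurd hv (fun hv => Set.disjoint_left.1 hQS hv (hYS h))
    have hPQsub : P ∪ Q ⊆ X := Set.union_subset hPX hQX
    have h5 : (P ∪ Q).ncard ≤ X.ncard := Set.ncard_le_ncard hPQsub (Set.toFinite _)
    have h6 : (P ∪ Q).ncard = P.ncard + Q.ncard := Set.ncard_union_eq hPQ
    have h7 : Y.ncard ≤ S.ncard := Set.ncard_le_ncard hYS (Set.toFinite _)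
    rcases hor with hor | hor <;> omega
  · push_neg at hYN
    obtain ⟨y₀, hy₀Y, hy₀N⟩ := hYN
    have hsur := surplus hbip hconn hbrace hcard hPX hP ⟨y₀, hy₀Y, hy₀N⟩
    have h8 : (nbhd G P).ncard ≤ (S ∩ Y).ncard := Set.ncard_le_ncard hNsub (Set.toFinite _)
    have h9 : (S ∩ Y).ncard ≤ S.ncard := Set.ncard_le_ncard Set.inter_subset_left
      (Set.toFinite _)
    rcases hor with hor | hor <;> omega

lemma master (hcard : 5 ≤ Fintype.card V) {P Q S : Set V}
    (hU : P ∪ Q ∪ S = Set.univ) (hPQ : Disjoint P Q) (hPS : Disjoint P S) (hQS : Disjoint Q S)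
    (hne : ∀ x ∈ P, ∀ y ∈ Q, ¬ G.Adj x y) (hP : P.Nonempty) (hQ : Q.Nonempty)
    (hS3 : S.ncard ≤ 3) (hor : S.ncard ≤ 2 ∨ (2 ≤ P.ncard ∧ 2 ≤ Q.ncard)) : False := by
  have hU' : Q ∪ P ∪ S = Set.univ := by rwa [Set.union_comm Q P]
  have hne' : ∀ x ∈ Q, ∀ y ∈ P, ¬ G.Adj x y := fun x hx y hy hadj => hne y hy x hx hadj.symm
  have hor' : S.ncard ≤ 2 ∨ (2 ≤ Q.ncard ∧ 2 ≤ P.ncard) := by tauto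
  have c1 : (P ∩ Y).Nonempty := corner hbip hconn hbrace hcard hU hPQ hPS hQS hne hP hQ hS3 hor
  have c2 : (P ∩ X).Nonempty :=
    corner (bip_symm hbip) hconn hbrace hcard hU hPQ hPS hQS hne hP hQ hS3 hor
  have c3 : (Q ∩ Y).Nonempty :=
    corner hbip hconn hbrace hcard hU' hPQ.symm hQS hPS hne' hQ hP hS3 hor'
  have c4 : (Q ∩ X).Nonempty :=
    corner (bip_symm hbip) hconn hbrace hcard hU' hPQ.symm hQS hPS hne' hQ hP hS3 hor'
  have I₁ := keybound hbip hconn hbrace hcard hU hne c1 c4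
  have I₂ := keybound hbip hconn hbrace hcard hU' hne' c3 c2
  have hbal : X.ncard = Y.ncard := bip_balance hbip hbrace
  have hX := split3 hU hPQ hPS hQS X
  have hY := split3 hU hPQ hPS hQS Y
  have hS := split2 hbip S
  omega

end cuts

end BraceAux

open BraceAux

/-- Every brace (connected bipartite graph on at least five vertices in which every matching
of size at most two extends to a perfect matching) is internally 4-connected. -/
theorem stmt_13 {V : Type u} [Fintype V] (G : SimpleGraph V) (A B : Set V)
    (hbip : G.IsBipartition A B) (hconn : G.Connected) (hcard : 5 ≤ Fintype.card V)
    (hbrace : ∀ M : G.Subgraph, M.IsMatching → M.edgeSet.ncard ≤ 2 →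
      ∃ M' : G.Subgraph, M.edgeSet ⊆ M'.edgeSet ∧ M'.IsPerfectMatching) :
    G.InternallyFourConnected := by
  refine ⟨⟨by omega, ?_⟩, hcard, ?_⟩
  · -- 3-connectivity
    intro S hS
    have hSc : Sᶜ.Nonempty := by
      rw [Set.nonempty_compl]
      intro h
      subst h
      rw [Set.ncard_univ, Nat.card_eq_fintype_card] at hS
      omega
    rw [connected_iff]
    refine ⟨?_, ⟨⟨hSc.choose, hSc.choose_spec⟩⟩⟩
    intro u v
    by_contra hr
    set Pset : Set V := {z : V | ∃ hz : z ∈ Sᶜ, (G.induce Sᶜ).Reachable u ⟨z, hz⟩} with hPdef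
    set Qset : Set V := Sᶜ \ Pset with hQdef
    have hPsub : Pset ⊆ Sᶜ := fun z hz => hz.choose
    have huP : (u : V) ∈ Pset := ⟨u.2, by exact Reachable.refl _⟩
    have hvQ : (v : V) ∈ Qset := by
      refine ⟨v.2, ?_⟩
      rintro ⟨hz, hreach⟩
      exact hr (by convert hreach using 2)
    refine master hbip hconn hbrace hcard (P := Pset) (Q := Qset) (S := S) ?_ ?_ ?_ ?_ ?_
      ⟨u, huP⟩ ⟨v, hvQ⟩ (by omega) (Or.inl hS)
    · ext z
      simp only [Set.mem_union, Set.mem_univ, iff_true]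
      by_cases hz : z ∈ S
      · tauto
      · by_cases hzP : z ∈ Pset
        · tauto
        · exact Or.inl (Or.inr ⟨hz, hzP⟩)
    · exact Set.disjoint_sdiff_right.mono_left (le_refl _) |>.symm.symm
    · exact Set.disjoint_left.2 fun z hz hzS => (hPsub hz) hzS
    · exact Set.disjoint_left.2 fun z hz hzS => hz.1 hzS
    · intro x hx y hy hadj
      obtain ⟨hxS, hreach⟩ := hx
      have hyS : y ∈ Sᶜ := hy.1
      have hadj' : (G.induce Sᶜ).Adj ⟨x, hxS⟩ ⟨y, hyS⟩ := by
        simp only [comap_adj, Function.Embedding.coe_subtype]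
        exact hadj
      exact hy.2 ⟨hyS, hreach.trans hadj'.reachable⟩
  · rintro ⟨P, Q, C, hU, hPQ, hPC, hQC, hP2, hQ2, hC3, hne⟩
    have hP : P.Nonempty := (Set.ncard_pos (Set.toFinite P)).1 (by omega)
    have hQ : Q.Nonempty := (Set.ncard_pos (Set.toFinite Q)).1 (by omega)
    exact master hbip hconn hbrace hcard hU hPQ hPC hQC hne hP hQ (by omega)
      (Or.inr ⟨hP2, hQ2⟩)
end

section
/- Let G be a graph, H a hex in G, u an internal vertex of a segment P of H, and suppose G is 3-connected. Then there exists a hex H'' in G with the same feet as H except possibly for the two ends of P, together with an H''-path Q (a path with both ends in H'' and no internal vertices or edges in H'') having one end an internal vertex of the segment of H'' corresponding to P, and whose other end lies in V(H'') minus the vertex set of that segment. -/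
open SimpleGraph

universe u

variable {V : Type u}

/-!
Deleting the two ends of `P` leaves the 3-connected graph `G` connected, so some walk avoiding
them runs from `u` to a foot of `H` off `P`. Its stretch from the last vertex on `P` before it
first meets `H - P` up to that meeting point is the required `H`-path, so no rerouting is needed:
`H'' = H` works.
-/
namespace SimpleGraph

variable {G : SimpleGraph V}

lemma Connected.exists_walk_support_subset_of_induce {s : Set V} (h : (G.induce s).Connected)
    {a b : V} (ha : a ∈ s) (hb : b ∈ s) : ∃ w : G.Walk a b, ∀ v ∈ w.support, v ∈ s := by
  obtain ⟨w⟩ := h.preconnected ⟨a, ha⟩ ⟨b, hb⟩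
  have hw : ∀ v ∈ (w.map (Embedding.induce s).toHom).support, v ∈ s := by
    intro v hv
    rw [Walk.support_map] at hv
    obtain ⟨z, -, rfl⟩ := List.mem_map.mp hv
    exact z.2
  exact ⟨_, hw⟩

namespace Walk

lemma exists_prefix_mem_only_at_end {B : Set V} :
    ∀ {a b : V} (w : G.Walk a b), b ∈ B →
      ∃ y ∈ B, ∃ w' : G.Walk a y,
        w'.support ⊆ w.support ∧ ∀ v ∈ w'.support, v ∈ B → v = y
  | a, _, nil, hb => ⟨a, hb, nil, List.Subset.refl _, by simp⟩
  | a, _, cons h w, hb => by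
    by_cases ha : a ∈ B
    · exact ⟨a, ha, nil, by simp, by simp⟩
    obtain ⟨y, hy, w', hsub, hlast⟩ := exists_prefix_mem_only_at_end w hb
    refine ⟨y, hy, cons h w', List.cons_subset_cons _ hsub, fun v hv hvB => ?_⟩
    rcases List.mem_cons.mp (support_cons h w' ▸ hv) with rfl | hv
    · exact absurd hvB ha
    · exact hlast v hv hvB

lemma exists_isPath_between [DecidableEq V] {A B : Set V} {a b : V} (w : G.Walk a b)
    (ha : a ∈ A) (hb : b ∈ B) :
    ∃ x ∈ A, ∃ y ∈ B, ∃ q : G.Walk x y, q.IsPath ∧ q.support ⊆ w.support ∧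
      (∀ v ∈ q.support, v ∈ A → v = x) ∧ ∀ v ∈ q.support, v ∈ B → v = y := by
  obtain ⟨y, hy, w₁, hw₁, hlastB⟩ := w.exists_prefix_mem_only_at_end hb
  obtain ⟨x, hx, r, hr, hlastA⟩ := w₁.reverse.exists_prefix_mem_only_at_end ha
  have hr₁ : r.reverse.support ⊆ w₁.support := by
    simpa only [support_reverse, List.reverse_subset, List.subset_reverse] using hr
  have hq : r.reverse.bypass.support ⊆ r.reverse.support := support_bypass_subset_support _
  refine ⟨x, hx, y, hy, r.reverse.bypass, bypass_isPath _,
    List.Subset.trans hq (List.Subset.trans hr₁ hw₁), fun v hv hvA => hlastA v ?_ hvA,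
    fun v hv hvB => hlastB v (hr₁ (hq hv)) hvB⟩
  simpa only [support_reverse, List.mem_reverse] using hq hv

end Walk

namespace Hex

variable (H : G.Hex)

lemma mem_suppSet_of_mem_seg {i j : Fin 3} {v : V} (hv : v ∈ (H.seg i j).support) :
    v ∈ H.suppSet :=
  Set.mem_iUnion₂.mpr ⟨i, j, hv⟩

lemma fA_not_mem_seg {i i' : Fin 3} (hi : i' ≠ i) (j : Fin 3) :
    H.fA i' ∉ (H.seg i j).support := fun hmem => by
  rcases H.seg_meet i' j i j (by simp [hi]) _ (H.seg i' j).start_mem_support hmem with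
    ⟨-, rfl⟩ | ⟨h, -⟩
  · exact hi rfl
  · exact H.disjAB i' j h

lemma mk_not_mem_edgeSetH {i j : Fin 3} {x y : V} (hx : x ∈ (H.seg i j).support)
    (hxA : x ≠ H.fA i) (hxB : x ≠ H.fB j) (hy : y ∉ (H.seg i j).support) :
    s(x, y) ∉ H.edgeSetH := fun hxy => by
  obtain ⟨i₁, j₁, he⟩ : ∃ i₁ j₁, s(x, y) ∈ (H.seg i₁ j₁).edges := by
    simpa [edgeSetH] using hxy
  have hne : (i, j) ≠ (i₁, j₁) := by
    rintro ⟨⟩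
    exact hy ((H.seg i j).snd_mem_support_of_mem_edges he)
  rcases H.seg_meet i j i₁ j₁ hne x hx ((H.seg i₁ j₁).fst_mem_support_of_mem_edges he) with
    ⟨h, -⟩ | ⟨h, -⟩
  · exact hxA h
  · exact hxB h

lemma walk_edges_not_mem_edgeSetH {i j : Fin 3} {x y : V} (q : G.Walk x y)
    (hq : q.supp ∩ H.suppSet ⊆ {x, y}) (hx : x ∈ (H.seg i j).support)
    (hxA : x ≠ H.fA i) (hxB : x ≠ H.fB j) (hy : y ∉ (H.seg i j).support) :
    ∀ e ∈ q.edges, e ∉ H.edgeSetH := by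
  intro e he heH
  induction e using Sym2.ind with
  | _ a b =>
  obtain ⟨i₁, j₁, hab⟩ : ∃ i₁ j₁, s(a, b) ∈ (H.seg i₁ j₁).edges := by
    simpa [edgeSetH] using heH
  have ha : a = x ∨ a = y := hq ⟨q.fst_mem_support_of_mem_edges he,
    H.mem_suppSet_of_mem_seg ((H.seg i₁ j₁).fst_mem_support_of_mem_edges hab)⟩
  have hb : b = x ∨ b = y := hq ⟨q.snd_mem_support_of_mem_edges he,
    H.mem_suppSet_of_mem_seg ((H.seg i₁ j₁).snd_mem_support_of_mem_edges hab)⟩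
  have hab' : a ≠ b := (q.edges_subset_edgeSet he).ne
  have hxy : s(x, y) ∈ H.edgeSetH := by
    rcases ha with rfl | rfl <;> rcases hb with rfl | rfl
    · exact absurd rfl hab'
    · exact heH
    · rwa [Sym2.eq_swap]
    · exact absurd rfl hab'
  exact H.mk_not_mem_edgeSetH hx hxA hxB hy hxy

end Hex

end SimpleGraph

/-- In a 3-connected graph, given an internal vertex `u` of a segment `P = seg i j` of a hex
`H`, after possibly rerouting `P` (keeping all other feet) there is a hex `H''` together with
an `H''`-path from an internal vertex of the segment corresponding to `P` to the rest of the
hex. -/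
theorem stmt_17 {V : Type u} [Fintype V] (G : SimpleGraph V) (h3 : G.ThreeConnected)
    (H : G.Hex) (i j : Fin 3) (u : V) (hu : u ∈ (H.seg i j).support)
    (hu1 : u ≠ H.fA i) (hu2 : u ≠ H.fB j) :
    ∃ H'' : G.Hex,
      (∀ i', i' ≠ i → H''.fA i' = H.fA i') ∧ (∀ j', j' ≠ j → H''.fB j' = H.fB j') ∧
      ∃ (x y : V) (q : G.Walk x y), q.IsPath ∧ 0 < q.length ∧
        x ∈ (H''.seg i j).supp ∧ x ≠ H''.fA i ∧ x ≠ H''.fB j ∧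
        y ∈ H''.suppSet ∧ y ∉ (H''.seg i j).supp ∧
        q.supp ∩ H''.suppSet ⊆ {x, y} ∧
        ∀ e ∈ q.edges, e ∉ H''.edgeSetH := by
  classical
  obtain ⟨i', hi'⟩ := exists_ne i
  have hconn : (G.induce {H.fA i, H.fB j}ᶜ).Connected :=
    h3.2 _ ((Set.ncard_insert_le _ _).trans (by rw [Set.ncard_singleton]))
  obtain ⟨w, hw⟩ := hconn.exists_walk_support_subset_of_induce (a := u) (b := H.fA i')
    (by simp [hu1, hu2])
    (by simp [H.disjAB i' j, H.injA.ne hi'])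
  obtain ⟨x, hx, y, ⟨hyH, hyP⟩, q, hq, hqw, hqx, hqy⟩ :=
    w.exists_isPath_between (A := (H.seg i j).supp) (B := H.suppSet \ (H.seg i j).supp) hu
      ⟨H.mem_suppSet_of_mem_seg (H.seg i' j).start_mem_support, H.fA_not_mem_seg hi' j⟩
  have hxS : x ∉ ({H.fA i, H.fB j} : Set V) := hw x (hqw q.start_mem_support)
  simp only [Set.mem_insert_iff, Set.mem_singleton_iff, not_or] at hxS
  have hsupp : q.supp ∩ H.suppSet ⊆ {x, y} := fun v ⟨hvq, hvH⟩ => by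
    by_cases hvP : v ∈ (H.seg i j).supp
    · exact Or.inl (hqx v hvq hvP)
    · exact Or.inr (hqy v hvq ⟨hvH, hvP⟩)
  refine ⟨H, fun _ _ => rfl, fun _ _ => rfl, x, y, q, hq, ?_, hx, hxS.1, hxS.2, hyH, hyP,
    hsupp, H.walk_edges_not_mem_edgeSetH q hsupp hx hxS.1 hxS.2 hyP⟩
  exact Walk.not_nil_iff_lt_length.mp (Walk.not_nil_of_ne fun h => hyP (h ▸ hx))
end
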